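/- arXiv:2302.04493 — 2 statements merged into one kernel-verified Lean document; each statement's English description precedes it below -/
import Mathlib

section
/- Let t be an m-trace on an ideal I of a pivotal k-category C and N_t its kernel as defined by N_t(V,W) = { f : V → W | t_U(g₁∘f∘g₂) = 0 for all U ∈ I, g₁ : W → U, g₂ : U → V }. If f ∈ N_t(V,W) and V', V'' are objects of C, then id_{V'} ⊗ f ⊗ id_{V''} ∈ N_t(V'⊗V⊗V'', V'⊗W⊗V''). -/
/-!
Write `X*` for `dual X`. Given `g₂ : U ⟶ V ⊗ X` and `g₁ : W ⊗ X ⟶ U`, bend the strand `X` of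
`g₂ ≫ f ▷ X ≫ g₁` around with the cap `ev' X` and a cup `𝟙 ⟶ X ⊗ X*`. This yields morphisms
`U ⊗ X* ⟶ V` and `W ⟶ U ⊗ X*` whose composite through `f` has right partial trace
`g₂ ≫ f ▷ X ≫ g₁`; so `t_U (g₂ ≫ f ▷ X ≫ g₁) = t_{U ⊗ X*} (⋯ ≫ f ≫ ⋯) = 0`. The left partial trace
does the same for `X ◁ f`.

The two duality structures carried by `PivotalData` are not assumed compatible, so the
partial trace over `X*` (which uses `coev X*` and `ev' X*`) straightens the strand only up
to the comparison isomorphism `X ≅ X**` given by uniqueness of duals. The cups `rightCup` and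
`leftCup` absorb the inverse of that isomorphism.
-/

open CategoryTheory CategoryTheory.MonoidalCategory

namespace SkeinPaper

/-- A pivotal structure: a dual object with four (co)evaluation morphisms
satisfying the zig-zag identities. -/
class PivotalData (C : Type*) [Category C] [MonoidalCategory C] where
  dual : C → C
  coev : ∀ V : C, 𝟙_ C ⟶ V ⊗ dual V
  ev : ∀ V : C, dual V ⊗ V ⟶ 𝟙_ C
  coev' : ∀ V : C, 𝟙_ C ⟶ dual V ⊗ V
  ev' : ∀ V : C, V ⊗ dual V ⟶ 𝟙_ C
  zig1 : ∀ V : C, (λ_ V).inv ≫ (coev V ▷ V) ≫ (α_ V (dual V) V).hom ≫ (V ◁ ev V) ≫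
    (ρ_ V).hom = 𝟙 V
  zig2 : ∀ V : C, (ρ_ (dual V)).inv ≫ (dual V ◁ coev V) ≫ (α_ (dual V) V (dual V)).inv ≫
    (ev V ▷ dual V) ≫ (λ_ (dual V)).hom = 𝟙 (dual V)
  zig3 : ∀ V : C, (ρ_ V).inv ≫ (V ◁ coev' V) ≫ (α_ V (dual V) V).inv ≫ (ev' V ▷ V) ≫
    (λ_ V).hom = 𝟙 V
  zig4 : ∀ V : C, (λ_ (dual V)).inv ≫ (coev' V ▷ dual V) ≫ (α_ (dual V) V (dual V)).hom ≫
    (dual V ◁ ev' V) ≫ (ρ_ (dual V)).hom = 𝟙 (dual V)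

open PivotalData

variable {C : Type*} [Category C] [MonoidalCategory C] [PivotalData C]

/-- The dual of a morphism. -/
def dualHom {V W : C} (f : V ⟶ W) : dual W ⟶ dual V :=
  (ρ_ (dual W)).inv ≫ (dual W ◁ coev V) ≫ (dual W ◁ (f ▷ dual V)) ≫
    (α_ (dual W) W (dual V)).inv ≫ (ev W ▷ dual V) ≫ (λ_ (dual V)).hom

/-- Right partial trace of `f : U ⊗ W ⟶ U ⊗ W`. -/
def ptrR {U W : C} (f : U ⊗ W ⟶ U ⊗ W) : U ⟶ U :=
  (ρ_ U).inv ≫ (U ◁ coev W) ≫ (α_ U W (dual W)).inv ≫ (f ▷ dual W) ≫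
    (α_ U W (dual W)).hom ≫ (U ◁ ev' W) ≫ (ρ_ U).hom

/-- Left partial trace of `g : W ⊗ U ⟶ W ⊗ U`. -/
def ptrL {U W : C} (g : W ⊗ U ⟶ W ⊗ U) : U ⟶ U :=
  (λ_ U).inv ≫ (coev' W ▷ U) ≫ (α_ (dual W) W U).hom ≫ (dual W ◁ g) ≫
    (α_ (dual W) W U).inv ≫ (ev W ▷ U) ≫ (λ_ U).hom

/-- An ideal of objects: a class of objects closed under tensoring with arbitrary
objects and under retracts. -/
structure CatIdeal (C : Type*) [Category C] [MonoidalCategory C] where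
  mem : C → Prop
  tensor_right : ∀ ⦃V : C⦄ (W : C), mem V → mem (V ⊗ W)
  tensor_left : ∀ ⦃V : C⦄ (W : C), mem V → mem (W ⊗ V)
  retract : ∀ ⦃W V : C⦄ (f : W ⟶ V) (g : V ⟶ W), f ≫ g = 𝟙 W → mem V → mem W

variable (k : Type*) [Field k]

section Trace
variable [Preadditive C] [Linear k C]

/-- A right m-trace on an ideal. -/
structure RightMTrace (I : CatIdeal C) where
  t : ∀ V : C, I.mem V → ((V ⟶ V) →ₗ[k] k)
  cyclic : ∀ {U V : C} (hU : I.mem U) (hV : I.mem V) (f : V ⟶ U) (g : U ⟶ V),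
    t V hV (f ≫ g) = t U hU (g ≫ f)
  rightPartial : ∀ {U : C} (W : C) (hU : I.mem U) (f : U ⊗ W ⟶ U ⊗ W),
    t (U ⊗ W) (I.tensor_right W hU) f = t U hU (ptrR f)

/-- An m-trace on an ideal: cyclic, with both the right and left partial trace
properties. -/
structure MTrace (I : CatIdeal C) where
  t : ∀ V : C, I.mem V → ((V ⟶ V) →ₗ[k] k)
  cyclic : ∀ {U V : C} (hU : I.mem U) (hV : I.mem V) (f : V ⟶ U) (g : U ⟶ V),
    t V hV (f ≫ g) = t U hU (g ≫ f)
  rightPartial : ∀ {U : C} (W : C) (hU : I.mem U) (f : U ⊗ W ⟶ U ⊗ W),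
    t (U ⊗ W) (I.tensor_right W hU) f = t U hU (ptrR f)
  leftPartial : ∀ {U : C} (W : C) (hU : I.mem U) (g : W ⊗ U ⟶ W ⊗ U),
    t (W ⊗ U) (I.tensor_left W hU) g = t U hU (ptrL g)

/-- The kernel of a right m-trace. -/
def RightMTrace.inKer {I : CatIdeal C} (τ : RightMTrace k I) {V W : C} (f : V ⟶ W) : Prop :=
  ∀ (U : C) (hU : I.mem U) (g₁ : W ⟶ U) (g₂ : U ⟶ V), τ.t U hU (g₂ ≫ f ≫ g₁) = 0

/-- The kernel of an m-trace. -/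
def MTrace.inKer {I : CatIdeal C} (τ : MTrace k I) {V W : C} (f : V ⟶ W) : Prop :=
  ∀ (U : C) (hU : I.mem U) (g₁ : W ⟶ U) (g₂ : U ⟶ V), τ.t U hU (g₂ ≫ f ≫ g₁) = 0

/-- A tensor ideal of morphisms. -/
structure TensorIdealHom where
  N : ∀ V W : C, Submodule k (V ⟶ W)
  comp_pre : ∀ {V W X : C} (h : X ⟶ V) {f : V ⟶ W}, f ∈ N V W → h ≫ f ∈ N X W
  comp_post : ∀ {V W X : C} (h : W ⟶ X) {f : V ⟶ W}, f ∈ N V W → f ≫ h ∈ N V X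
  tensor_left : ∀ {V W V' W' : C} (g : V' ⟶ W') {f : V ⟶ W}, f ∈ N V W →
    (g ⊗ₘ f) ∈ N (V' ⊗ V) (W' ⊗ W)
  tensor_right : ∀ {V W V' W' : C} (g : V' ⟶ W') {f : V ⟶ W}, f ∈ N V W →
    (f ⊗ₘ g) ∈ N (V ⊗ V') (W ⊗ W')

end Trace

end SkeinPaper

namespace SkeinPaper

open PivotalData

variable {C : Type*} [Category C] [MonoidalCategory C] [PivotalData C]

namespace PivotalData

abbrev exactPairing (V : C) : ExactPairing V (dual V) where
  coevaluation' := coev V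
  evaluation' := ev V
  coevaluation_evaluation' := by
    rw [← cancel_epi (ρ_ (dual V)).inv, ← cancel_mono (λ_ (dual V)).hom]
    simpa using zig2 V
  evaluation_coevaluation' := by
    rw [← cancel_epi (λ_ V).inv, ← cancel_mono (ρ_ V).hom]
    simpa using zig1 V

abbrev exactPairing' (V : C) : ExactPairing (dual V) V where
  coevaluation' := coev' V
  evaluation' := ev' V
  coevaluation_evaluation' := by
    rw [← cancel_epi (ρ_ V).inv, ← cancel_mono (λ_ V).hom]
    simpa using zig3 V
  evaluation_coevaluation' := by
    rw [← cancel_epi (λ_ (dual V)).inv, ← cancel_mono (ρ_ (dual V)).hom]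
    simpa using zig4 V

end PivotalData

section Mates

variable {S T W : C}

def pairingMateR (e : S ⊗ W ⟶ 𝟙_ C) : S ⟶ dual W :=
  (ρ_ S).inv ≫ (S ◁ coev W) ≫ (α_ S W (dual W)).inv ≫ (e ▷ dual W) ≫ (λ_ (dual W)).hom

def copairingMateR (c : 𝟙_ C ⟶ S ⊗ W) : dual W ⟶ S :=
  (λ_ (dual W)).inv ≫ (c ▷ dual W) ≫ (α_ S W (dual W)).hom ≫ (S ◁ ev' W) ≫ (ρ_ S).hom

def pairingMateL (e : W ⊗ T ⟶ 𝟙_ C) : T ⟶ dual W :=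
  (λ_ T).inv ≫ (coev' W ▷ T) ≫ (α_ (dual W) W T).hom ≫ (dual W ◁ e) ≫ (ρ_ (dual W)).hom

def copairingMateL (c : 𝟙_ C ⟶ W ⊗ T) : dual W ⟶ T :=
  (ρ_ (dual W)).inv ≫ (dual W ◁ c) ≫ (α_ (dual W) W T).inv ≫ (ev W ▷ T) ≫ (λ_ T).hom

lemma copairingMateR_comp_whiskerRight {S' : C} (c : 𝟙_ C ⟶ S ⊗ W) (u : S ⟶ S') :
    copairingMateR (c ≫ u ▷ W) = copairingMateR c ≫ u := by
  calc copairingMateR (c ≫ u ▷ W)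
      = 𝟙 _ ⊗≫ c ▷ dual W ⊗≫ (u ▷ (W ⊗ dual W) ≫ S' ◁ ev' W) ⊗≫ 𝟙 _ := by
        simp only [copairingMateR, comp_whiskerRight, Category.assoc]; monoidal
    _ = 𝟙 _ ⊗≫ c ▷ dual W ⊗≫ (S ◁ ev' W ≫ u ▷ 𝟙_ C) ⊗≫ 𝟙 _ := by rw [← whisker_exchange]
    _ = copairingMateR c ≫ u := by simp only [copairingMateR]; monoidal

lemma copairingMateL_comp_whiskerLeft {T' : C} (c : 𝟙_ C ⟶ W ⊗ T) (u : T ⟶ T') :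
    copairingMateL (c ≫ W ◁ u) = copairingMateL c ≫ u := by
  calc copairingMateL (c ≫ W ◁ u)
      = 𝟙 _ ⊗≫ dual W ◁ c ⊗≫ ((dual W ⊗ W) ◁ u ≫ ev W ▷ T') ⊗≫ 𝟙 _ := by
        simp only [copairingMateL, MonoidalCategory.whiskerLeft_comp, Category.assoc]; monoidal
    _ = 𝟙 _ ⊗≫ dual W ◁ c ⊗≫ (ev W ▷ T ≫ 𝟙_ C ◁ u) ⊗≫ 𝟙 _ := by rw [whisker_exchange]
    _ = copairingMateL c ≫ u := by simp only [copairingMateL]; monoidal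

lemma copairingMateR_coev' (W : C) : copairingMateR (coev' W) = 𝟙 (dual W) := zig4 W

lemma copairingMateL_coev (W : C) : copairingMateL (coev W) = 𝟙 (dual W) := zig2 W

lemma pairingMateR_ev' (S : C) :
    pairingMateR (ev' S) = (rightDualIso (exactPairing' S) (exactPairing (dual S))).hom := by
  simp only [rightDualIso, rightAdjointMate, pairingMateR, ExactPairing.coevaluation,
    ExactPairing.evaluation]
  monoidal

lemma pairingMateL_ev (T : C) :
    pairingMateL (ev T) = (leftDualIso (exactPairing T) (exactPairing' (dual T))).hom := by
  simp only [leftDualIso, leftAdjointMate, pairingMateL, ExactPairing.coevaluation,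
    ExactPairing.evaluation]
  monoidal

end Mates

def rightCup (X : C) : 𝟙_ C ⟶ X ⊗ dual X :=
  coev' (dual X) ≫ (rightDualIso (exactPairing' X) (exactPairing (dual X))).inv ▷ dual X

def leftCup (X : C) : 𝟙_ C ⟶ dual X ⊗ X :=
  coev (dual X) ≫ dual X ◁ (leftDualIso (exactPairing X) (exactPairing' (dual X))).inv

lemma pairingMateR_ev'_comp_copairingMateR_rightCup (X : C) :
    pairingMateR (ev' X) ≫ copairingMateR (rightCup X) = 𝟙 X := by
  rw [rightCup, copairingMateR_comp_whiskerRight, copairingMateR_coev', Category.id_comp,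
    pairingMateR_ev', Iso.hom_inv_id]

lemma pairingMateL_ev_comp_copairingMateL_leftCup (X : C) :
    pairingMateL (ev X) ≫ copairingMateL (leftCup X) = 𝟙 X := by
  rw [leftCup, copairingMateL_comp_whiskerLeft, copairingMateL_coev, Category.id_comp,
    pairingMateL_ev, Iso.hom_inv_id]

section Bending

variable {M N P S W : C}

def capR (e : S ⊗ W ⟶ 𝟙_ C) (h : M ⟶ P ⊗ S) : M ⊗ W ⟶ P :=
  (h ▷ W) ≫ (α_ P S W).hom ≫ (P ◁ e) ≫ (ρ_ P).hom

def cupR (c : 𝟙_ C ⟶ S ⊗ W) (k : P ⊗ S ⟶ N) : P ⟶ N ⊗ W :=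
  (ρ_ P).inv ≫ (P ◁ c) ≫ (α_ P S W).inv ≫ (k ▷ W)

def capL (e : W ⊗ S ⟶ 𝟙_ C) (h : M ⟶ S ⊗ P) : W ⊗ M ⟶ P :=
  (W ◁ h) ≫ (α_ W S P).inv ≫ (e ▷ P) ≫ (λ_ P).hom

def cupL (c : 𝟙_ C ⟶ W ⊗ S) (k : S ⊗ P ⟶ N) : P ⟶ W ⊗ N :=
  (λ_ P).inv ≫ (c ▷ P) ≫ (α_ W S P).hom ≫ (W ◁ k)

lemma ptrR_capR_comp_cupR {P' : C} (e : S ⊗ W ⟶ 𝟙_ C) (c : 𝟙_ C ⟶ S ⊗ W)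
    (h : M ⟶ P ⊗ S) (z : P ⟶ P') (k : P' ⊗ S ⟶ M) :
    ptrR (capR e h ≫ z ≫ cupR c k) =
      h ≫ (z ⊗ₘ (pairingMateR e ≫ copairingMateR c)) ≫ k := by
  calc ptrR (capR e h ≫ z ≫ cupR c k)
      = 𝟙 M ⊗≫ (M ◁ coev W ≫ h ▷ (W ⊗ dual W)) ⊗≫ (P ◁ e) ▷ dual W ⊗≫
          (z ▷ 𝟙_ C ≫ P' ◁ c) ▷ dual W ⊗≫ (k ▷ (W ⊗ dual W) ≫ M ◁ ev' W) ⊗≫ 𝟙 M := by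
        simp only [ptrR, capR, cupR]; monoidal
    _ = 𝟙 M ⊗≫ (h ▷ 𝟙_ C ≫ (P ⊗ S) ◁ coev W) ⊗≫ (P ◁ e) ▷ dual W ⊗≫
          (P ◁ c ≫ z ▷ (S ⊗ W)) ▷ dual W ⊗≫ ((P' ⊗ S) ◁ ev' W ≫ k ▷ 𝟙_ C) ⊗≫ 𝟙 M := by
        rw [whisker_exchange h (coev W), ← whisker_exchange k (ev' W), ← whisker_exchange z c]
    _ = h ⊗≫ ((P ⊗ S) ◁ coev W) ⊗≫ (P ◁ e) ▷ dual W ⊗≫ (P ◁ c) ▷ dual W ⊗≫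
          (z ▷ (S ⊗ (W ⊗ dual W)) ≫ P' ◁ (S ◁ ev' W)) ⊗≫ k := by
        monoidal
    _ = h ⊗≫ ((P ⊗ S) ◁ coev W) ⊗≫ (P ◁ e) ▷ dual W ⊗≫ (P ◁ c) ▷ dual W ⊗≫
          (P ◁ (S ◁ ev' W) ≫ z ▷ (S ⊗ 𝟙_ C)) ⊗≫ k := by
        rw [← whisker_exchange z (S ◁ ev' W)]
    _ = h ≫ (z ⊗ₘ (pairingMateR e ≫ copairingMateR c)) ≫ k := by
        simp only [pairingMateR, copairingMateR, tensorHom_def']; monoidal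

lemma ptrL_capL_comp_cupL {P' : C} (e : W ⊗ S ⟶ 𝟙_ C) (c : 𝟙_ C ⟶ W ⊗ S)
    (h : M ⟶ S ⊗ P) (z : P ⟶ P') (k : S ⊗ P' ⟶ M) :
    ptrL (capL e h ≫ z ≫ cupL c k) =
      h ≫ ((pairingMateL e ≫ copairingMateL c) ⊗ₘ z) ≫ k := by
  calc ptrL (capL e h ≫ z ≫ cupL c k)
      = 𝟙 M ⊗≫ (coev' W ▷ M ≫ (dual W ⊗ W) ◁ h) ⊗≫ dual W ◁ (e ▷ P) ⊗≫
          dual W ◁ (𝟙_ C ◁ z ≫ c ▷ P') ⊗≫ ((dual W ⊗ W) ◁ k ≫ ev W ▷ M) ⊗≫ 𝟙 M := by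
        simp only [ptrL, capL, cupL]; monoidal
    _ = 𝟙 M ⊗≫ (𝟙_ C ◁ h ≫ coev' W ▷ (S ⊗ P)) ⊗≫ dual W ◁ (e ▷ P) ⊗≫
          dual W ◁ (c ▷ P ≫ (W ⊗ S) ◁ z) ⊗≫ (ev W ▷ (S ⊗ P') ≫ 𝟙_ C ◁ k) ⊗≫ 𝟙 M := by
        rw [← whisker_exchange (coev' W) h, whisker_exchange (ev W) k, whisker_exchange c z]
    _ = h ⊗≫ (coev' W ▷ (S ⊗ P)) ⊗≫ dual W ◁ (e ▷ P) ⊗≫ dual W ◁ (c ▷ P) ⊗≫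
          (((dual W ⊗ W) ⊗ S) ◁ z ≫ (ev W ▷ S) ▷ P') ⊗≫ k := by
        monoidal
    _ = h ⊗≫ (coev' W ▷ (S ⊗ P)) ⊗≫ dual W ◁ (e ▷ P) ⊗≫ dual W ◁ (c ▷ P) ⊗≫
          ((ev W ▷ S) ▷ P ≫ (𝟙_ C ⊗ S) ◁ z) ⊗≫ k := by
        rw [whisker_exchange (ev W ▷ S) z]
    _ = h ≫ ((pairingMateL e ≫ copairingMateL c) ⊗ₘ z) ≫ k := by
        simp only [pairingMateL, copairingMateL, MonoidalCategory.tensorHom_def]; monoidal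

end Bending

namespace MTrace

variable {k : Type*} [Field k] [Preadditive C] [Linear k C] {I : CatIdeal C} (τ : MTrace k I)
  {U V W : C}

lemma t_comp_whiskerRight_comp (hU : I.mem U) (f : V ⟶ W) {X : C} (g₂ : U ⟶ V ⊗ X)
    (g₁ : W ⊗ X ⟶ U) :
    τ.t U hU (g₂ ≫ f ▷ X ≫ g₁) = τ.t (U ⊗ dual X) (I.tensor_right (dual X) hU)
      (capR (ev' X) g₂ ≫ f ≫ cupR (rightCup X) g₁) := by
  rw [τ.rightPartial, ptrR_capR_comp_cupR, pairingMateR_ev'_comp_copairingMateR_rightCup,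
    tensorHom_id]

lemma t_comp_whiskerLeft_comp (hU : I.mem U) (f : V ⟶ W) {X : C} (g₂ : U ⟶ X ⊗ V)
    (g₁ : X ⊗ W ⟶ U) :
    τ.t U hU (g₂ ≫ X ◁ f ≫ g₁) = τ.t (dual X ⊗ U) (I.tensor_left (dual X) hU)
      (capL (ev X) g₂ ≫ f ≫ cupL (leftCup X) g₁) := by
  rw [τ.leftPartial, ptrL_capL_comp_cupL, pairingMateL_ev_comp_copairingMateL_leftCup,
    id_tensorHom]

variable {τ} {f : V ⟶ W}

lemma inKer_whiskerRight (hf : τ.inKer k f) (X : C) : τ.inKer k (f ▷ X) := by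
  intro U hU g₁ g₂
  rw [t_comp_whiskerRight_comp]
  exact hf _ _ _ _

lemma inKer_whiskerLeft (hf : τ.inKer k f) (X : C) : τ.inKer k (X ◁ f) := by
  intro U hU g₁ g₂
  rw [t_comp_whiskerLeft_comp]
  exact hf _ _ _ _

end MTrace

end SkeinPaper

open SkeinPaper

/-- The kernel of an m-trace is closed under tensoring with
identities: if `f ∈ N_t(V,W)` then `id_{V'} ⊗ f ⊗ id_{V''} ∈ N_t`. -/
theorem stmt_4 {k : Type*} [Field k] {C : Type*} [Category C] [MonoidalCategory C]
    [Preadditive C] [Linear k C] [PivotalData C]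
    {I : CatIdeal C} (τ : MTrace k I)
    {V W : C} (f : V ⟶ W) (hf : τ.inKer k f) (V' V'' : C) :
    τ.inKer k ((V' ◁ f) ▷ V'') :=
  MTrace.inKer_whiskerRight (MTrace.inKer_whiskerLeft hf V') V''
end

section
/- Let t be an m-trace on an ideal I of a (strict) pivotal k-category C. Then for all objects W, U with W* ∈ I and U ∈ I and any g ∈ End(W*⊗U), one has t_U(ptr_L^{W*}(g)) = t_{W**}((ptr_R^U(g))*). -/
open CategoryTheory CategoryTheory.MonoidalCategory

open SkeinPaper SkeinPaper.PivotalData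

/-!
Write `ptr_L^{W*}(g) = b ≫ a` with `b : U ⟶ (W** ⊗ W*) ⊗ U` the coevaluation `coev'_{W*}`.
Cyclicity moves `b` to the end, and the right partial trace over `U` turns `a ≫ b` into
`(id_{W**} ⊗ ptr_R^U(g)) ≫ ev_{W*} ≫ coev'_{W*}` on `W** ⊗ W*`. A second right partial trace,
over `W*`, straightens this by the zig-zag identity into `ptr_R^U(g)*`.
-/

namespace SkeinPaper

section PartialTrace

variable {C : Type*} [Category C] [MonoidalCategory C] [PivotalData C]

theorem ptrR_whiskerLeft_comp_whiskerRight {A X U : C} (g : X ⊗ U ⟶ X ⊗ U)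
    (m : A ⊗ X ⟶ A ⊗ X) :
    ptrR ((α_ A X U).hom ≫ (A ◁ g) ≫ (α_ A X U).inv ≫ (m ▷ U)) = (A ◁ ptrR g) ≫ m := by
  simp only [ptrR, comp_whiskerRight, Category.assoc]
  rw [associator_naturality_left_assoc, ← whisker_exchange_assoc, rightUnitor_naturality]
  simp only [← Category.assoc]
  congr 1
  monoidal

theorem ptrR_whiskerLeft_comp_ev_comp_coev' {V : C} (h : V ⟶ V) :
    ptrR ((dual V ◁ h) ≫ ev V ≫ coev' V) = dualHom h := by
  simp only [ptrR, dualHom, comp_whiskerRight, Category.assoc]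
  rw [associator_inv_naturality_middle_assoc]
  congr 4
  calc (ev V ▷ dual V) ≫ (coev' V ▷ dual V) ≫ (α_ (dual V) V (dual V)).hom ≫
        (dual V ◁ ev' V) ≫ (ρ_ (dual V)).hom
      = (ev V ▷ dual V) ≫ (λ_ (dual V)).hom ≫ (λ_ (dual V)).inv ≫ (coev' V ▷ dual V) ≫
        (α_ (dual V) V (dual V)).hom ≫ (dual V ◁ ev' V) ≫ (ρ_ (dual V)).hom := by simp
    _ = (ev V ▷ dual V) ≫ (λ_ (dual V)).hom := by rw [zig4]; simp

end PartialTrace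

section Trace

variable {k : Type*} [Field k] {C : Type*} [Category C] [MonoidalCategory C] [Preadditive C]
  [Linear k C] [PivotalData C] {I : CatIdeal C}

def MTrace.toRightMTrace (τ : MTrace k I) : RightMTrace k I where
  t := τ.t
  cyclic := τ.cyclic
  rightPartial := τ.rightPartial

namespace RightMTrace

variable (τ : RightMTrace k I)

theorem t_ptrL {X U : C} (hX : I.mem (dual X)) (hU : I.mem U) (g : X ⊗ U ⟶ X ⊗ U) :
    τ.t U hU (ptrL g) =
      τ.t (dual X ⊗ X) (I.tensor_right X hX) ((dual X ◁ ptrR g) ≫ ev X ≫ coev' X) := by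
  have hXX : I.mem (dual X ⊗ X) := I.tensor_right X hX
  let a : (dual X ⊗ X) ⊗ U ⟶ U :=
    (α_ (dual X) X U).hom ≫ (dual X ◁ g) ≫ (α_ (dual X) X U).inv ≫ (ev X ▷ U) ≫ (λ_ U).hom
  let b : U ⟶ (dual X ⊗ X) ⊗ U := (λ_ U).inv ≫ (coev' X ▷ U)
  have hab : a ≫ b =
      (α_ (dual X) X U).hom ≫ (dual X ◁ g) ≫ (α_ (dual X) X U).inv ≫ ((ev X ≫ coev' X) ▷ U) := by
    simp only [a, b, comp_whiskerRight, Category.assoc, Iso.hom_inv_id_assoc]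
  calc τ.t U hU (ptrL g) = τ.t U hU (b ≫ a) := by simp only [ptrL, a, b, Category.assoc]
    _ = τ.t ((dual X ⊗ X) ⊗ U) (I.tensor_right U hXX) (a ≫ b) :=
        τ.cyclic (I.tensor_right U hXX) hU b a
    _ = τ.t (dual X ⊗ X) hXX (ptrR (a ≫ b)) := τ.rightPartial U hXX (a ≫ b)
    _ = _ := by rw [hab, ptrR_whiskerLeft_comp_whiskerRight]

theorem t_whiskerLeft_comp_ev_comp_coev' {X : C} (hX : I.mem (dual X)) (h : X ⟶ X) :
    τ.t (dual X ⊗ X) (I.tensor_right X hX) ((dual X ◁ h) ≫ ev X ≫ coev' X) =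
      τ.t (dual X) hX (dualHom h) := by
  rw [τ.rightPartial X hX, ptrR_whiskerLeft_comp_ev_comp_coev']

theorem t_ptrL_eq_t_dualHom_ptrR {X U : C} (hX : I.mem (dual X)) (hU : I.mem U)
    (g : X ⊗ U ⟶ X ⊗ U) :
    τ.t U hU (ptrL g) = τ.t (dual X) hX (dualHom (ptrR g)) := by
  rw [τ.t_ptrL hX, τ.t_whiskerLeft_comp_ev_comp_coev']

end RightMTrace

end Trace

end SkeinPaper

theorem stmt_15_general {k : Type*} [Field k] {C : Type*} [Category C] [MonoidalCategory C]
    [Preadditive C] [Linear k C] [PivotalData C]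
    {I : CatIdeal C} (τ : MTrace k I)
    (W U : C) (hU : I.mem U)
    (hWdd : I.mem (dual (dual W))) (g : dual W ⊗ U ⟶ dual W ⊗ U) :
    τ.t U hU (ptrL g) = τ.t (dual (dual W)) hWdd (dualHom (ptrR g)) :=
  τ.toRightMTrace.t_ptrL_eq_t_dualHom_ptrR hWdd hU g

/-- For an m-trace `t` on an ideal `I`, objects `W`, `U` with
`W* ∈ I`, `U ∈ I` and `g ∈ End(W* ⊗ U)`, one has
`t_U(ptr_L^{W*}(g)) = t_{W**}((ptr_R^U(g))*)`. -/
theorem stmt_15 {k : Type*} [Field k] {C : Type*} [Category C] [MonoidalCategory C]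
    [Preadditive C] [Linear k C] [PivotalData C]
    {I : CatIdeal C} (τ : MTrace k I)
    (W U : C) (hWd : I.mem (dual W)) (hU : I.mem U)
    (hWdd : I.mem (dual (dual W))) (g : dual W ⊗ U ⟶ dual W ⊗ U) :
    τ.t U hU (ptrL g) = τ.t (dual (dual W)) hWdd (dualHom (ptrR g)) :=
  stmt_15_general τ W U hU hWdd g
end
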